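/- Let K ≥ N, let L be an N×N complex matrix, B an N×K complex matrix, C a K×N complex matrix, and ε ∈ ℂ, and let J be the (N+K)×(N+K) block matrix [[L, B], [C, −ε·I_K]]. Then for every μ ∈ ℂ, det( μ·I_{N+K} − J ) = (μ + ε)^{K−N} · det( (μ + ε)·(μ·I_N − L) − B·C ). In particular, J has the eigenvalue −ε with algebraic multiplicity at least K − N, and all remaining eigenvalues are the roots of det( (μ+ε)·(μ·I_N − L) − B·C ) = 0. -/

import Mathlib

/-!
Right-multiplying `[[A, B], [C, d • 1]]` by `[[d • 1, 0], [-C, 1]]`, whose determinant is `d ^ N`,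
gives the block upper-triangular matrix `[[d • A - B * C, B], [0, d • 1]]`, whose determinant is
`d ^ K * det (d • A - B * C)`. Over `ℂ[X]` with `d = X + ε`, which is monic and hence cancellable,
this factors the characteristic polynomial of `J`; evaluating at `μ` gives the determinant identity.
-/

open Polynomial Matrix
open scoped nonZeroDivisors

namespace Matrix
variable {R : Type*} [CommRing R] {m n : Type*} [Fintype m] [Fintype n] [DecidableEq m]

theorem det_fromBlocks_smul_one_mul_pow [DecidableEq n] (A : Matrix m m R) (B : Matrix m n R)
    (C : Matrix n m R) (d : R) :
    (fromBlocks A B C (d • 1)).det * d ^ Fintype.card m =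
      d ^ Fintype.card n * (d • A - B * C).det := by
  have key : fromBlocks A B C (d • 1) * fromBlocks (d • 1) 0 (-C) 1 =
      fromBlocks (d • A - B * C) B 0 (d • 1) := by
    simp [fromBlocks_multiply, sub_eq_add_neg]
  have := congrArg det key
  rw [det_mul, det_fromBlocks_zero₁₂, det_fromBlocks_zero₂₁] at this
  simpa [det_smul, mul_comm] using this

theorem det_fromBlocks_smul_one [DecidableEq n] {d : R} (hd : d ∈ R⁰)
    (hmn : Fintype.card m ≤ Fintype.card n) (A : Matrix m m R) (B : Matrix m n R)
    (C : Matrix n m R) :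
    (fromBlocks A B C (d • 1)).det =
      d ^ (Fintype.card n - Fintype.card m) * (d • A - B * C).det := by
  rw [← mul_cancel_right_mem_nonZeroDivisors (pow_mem hd (Fintype.card m)),
    det_fromBlocks_smul_one_mul_pow, mul_right_comm, ← pow_add, Nat.sub_add_cancel hmn]

theorem charmatrix_neg_smul_one [DecidableEq n] (e : R) :
    charmatrix ((-e) • (1 : Matrix n n R)) = (X + C e) • (1 : Matrix n n R[X]) := by
  ext i j
  by_cases h : i = j <;> simp [h]

theorem charpoly_fromBlocks_neg_smul_one [DecidableEq n] (hmn : Fintype.card m ≤ Fintype.card n)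
    (A : Matrix m m R) (B : Matrix m n R) (C' : Matrix n m R) (e : R) :
    (fromBlocks A B C' ((-e) • 1)).charpoly = (X + C e) ^ (Fintype.card n - Fintype.card m) *
      ((X + C e) • charmatrix A - B.map C * C'.map C).det := by
  rw [charpoly, charmatrix_fromBlocks, charmatrix_neg_smul_one,
    det_fromBlocks_smul_one (monic_X_add_C e).mem_nonZeroDivisors hmn, Matrix.neg_mul,
    Matrix.mul_neg, neg_neg]

theorem eval_det_smul_charmatrix_sub (A : Matrix m m R) (B : Matrix m n R) (C' : Matrix n m R)
    (e t : R) : ((X + C e) • charmatrix A - B.map C * C'.map C).det.eval t =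
      ((t + e) • (t • 1 - A) - B * C').det := by
  rw [← coe_evalRingHom, RingHom.map_det]
  congr 1
  ext i j
  by_cases h : i = j <;> simp [h, mul_apply, eval_finsetSum]

end Matrix

/-- For `K ≥ N`, complex matrices `L : N × N`, `B : N × K`, `C : K × N`, `ε ∈ ℂ`, and the block
matrix `J = [[L, B], [C, -ε Iₖ]]`, one has
`det(μ I - J) = (μ + ε)^(K-N) · det((μ + ε)(μ Iₙ - L) - B C)` for every `μ ∈ ℂ`; in particular
`J` has eigenvalue `-ε` with algebraic multiplicity at least `K - N`. -/
theorem adaptive_block_charpoly_reduction (N K : ℕ) (hK : N ≤ K)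
    (L : Matrix (Fin N) (Fin N) ℂ) (B : Matrix (Fin N) (Fin K) ℂ)
    (Cm : Matrix (Fin K) (Fin N) ℂ) (ε : ℂ)
    (J : Matrix (Fin N ⊕ Fin K) (Fin N ⊕ Fin K) ℂ)
    (hJ : J = Matrix.fromBlocks L B Cm ((-ε) • 1)) :
    (∀ μ : ℂ,
      (μ • (1 : Matrix (Fin N ⊕ Fin K) (Fin N ⊕ Fin K) ℂ) - J).det =
        (μ + ε) ^ (K - N) *
          ((μ + ε) • (μ • (1 : Matrix (Fin N) (Fin N) ℂ) - L) - B * Cm).det) ∧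
    ((X : ℂ[X]) + C ε) ^ (K - N) ∣ J.charpoly := by
  subst hJ
  have hfactor := charpoly_fromBlocks_neg_smul_one (by simpa using hK) L B Cm ε
  rw [Fintype.card_fin, Fintype.card_fin] at hfactor
  refine ⟨fun μ => ?_, hfactor ▸ dvd_mul_right _ _⟩
  have := congrArg (eval μ) hfactor
  rwa [eval_charpoly, scalar_apply, ← smul_one_eq_diagonal, eval_mul, eval_pow, eval_add, eval_X,
    eval_C, eval_det_smul_charmatrix_sub] at this
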